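/- A connected nontrivial subgraph H of a connected graph G is a face subgraph of G (i.e., H = G_F for some nonempty proper face F of ∇_G) if and only if H is a maximal bipartite subgraph of the induced subgraph G[V(H)]. -/

import Mathlib

noncomputable def stdBasis {N : ℕ} (i : Fin N) : Fin N → ℝ := Pi.single i 1

def nabla {N : ℕ} (G : SimpleGraph (Fin N)) : Set (Fin N → ℝ) :=
  {x | ∃ i j, G.Adj i j ∧ x = stdBasis i - stdBasis j}

noncomputable def inn {N : ℕ} (x α : Fin N → ℝ) : ℝ := ∑ i, x i * α i

def IsFace {N : ℕ} (G : SimpleGraph (Fin N)) (F : Set (Fin N → ℝ)) : Prop :=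
  ∃ α : Fin N → ℝ, (∀ x ∈ nabla G, -1 ≤ inn x α) ∧
    F = {x | x ∈ nabla G ∧ inn x α = -1}

def IsFacet {N : ℕ} (G : SimpleGraph (Fin N)) (F : Set (Fin N → ℝ)) : Prop :=
  IsFace G F ∧ Module.finrank ℝ (vectorSpan ℝ F) = N - 2

def faceGraph {N : ℕ} (F : Set (Fin N → ℝ)) : SimpleGraph (Fin N) :=
  SimpleGraph.fromRel (fun i j => stdBasis i - stdBasis j ∈ F)

def MaxBipartiteSubgraph {N : ℕ} (G H : SimpleGraph (Fin N)) : Prop :=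
  H ≤ G ∧ H.Colorable 2 ∧ ∀ H', H' ≤ G → H'.Colorable 2 → H ≤ H' → H' = H

def inducedOn {N : ℕ} (G : SimpleGraph (Fin N)) (s : Set (Fin N)) : SimpleGraph (Fin N) where
  Adj i j := G.Adj i j ∧ i ∈ s ∧ j ∈ s
  symm := by constructor; intro i j h; exact ⟨h.1.symm, h.2.2, h.2.1⟩
  loopless := by constructor; intro i h; exact (G.ne_of_adj h.1) rfl

/-! A face of `∇_G` is cut out by a weight `α` with `|α i - α j| ≤ 1` on the edges of `G`, and
`G_F` is the graph of tight edges, `|α i - α j| = 1`. Along a tight edge `⌊α⌋` changes parity, which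
2-colours `G_F`. Since `G_F` is connected, `α` takes values in one coset of `ℤ` on `V(G_F)`, with
`α u - α v` of the same parity as any `G_F`-walk from `u` to `v`; so an edge of `G[V(G_F)]` that a
bipartite supergraph of `G_F` can contain joins the ends of an odd walk and is tight. Conversely, for
a maximal bipartite `H` take `α = ±1/2` on the colour classes and `0` elsewhere; maximality says that
the tight edges are exactly those of `H`. -/

namespace Int

lemma fract_eq_fract_of_abs_sub_eq_one {x y : ℝ} (h : |x - y| = 1) :
    fract x = fract y := by
  rcases abs_eq zero_le_one |>.1 h with h | h
  · rw [show x = y + 1 by linarith, fract_add_one]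
  · rw [show x = y - 1 by linarith, fract_sub_one]

end Int

namespace SimpleGraph

variable {V : Type*}

section UnitSteps

variable {H : SimpleGraph V} {f : V → ℝ} (hf : ∀ a b, H.Adj a b → |f a - f b| = 1)
include hf

-- Along an edge `f` moves by `±1`, hence so does `⌊f⌋`.
noncomputable def floorParityColoring : H.Coloring Bool :=
  Coloring.mk (fun a => decide (Even ⌊f a⌋)) fun {a b} hab => by
    rcases abs_eq zero_le_one |>.1 (hf a b hab) with h | h
    · simp [show f a = f b + 1 by linarith, Int.floor_add_one, ← Int.not_even_iff_odd]
    · simp [show f b = f a + 1 by linarith, Int.floor_add_one, ← Int.not_even_iff_odd]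

lemma Walk.fract_eq_fract {u v : V} (p : H.Walk u v) : Int.fract (f u) = Int.fract (f v) := by
  induction p with
  | nil => rfl
  | cons h _ ih => exact (Int.fract_eq_fract_of_abs_sub_eq_one (hf _ _ h)).trans ih

lemma Walk.abs_sub_eq_one_of_odd_length {u v : V} (p : H.Walk u v) (hodd : Odd p.length)
    (hle : |f u - f v| ≤ 1) : |f u - f v| = 1 := by
  set k := ⌊f u⌋ - ⌊f v⌋
  have hk : f u - f v = k := by
    have := p.fract_eq_fract hf
    rw [← Int.floor_add_fract (f u), ← Int.floor_add_fract (f v), this]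
    push_cast [k]
    ring
  have hk_odd : Odd k := by
    have hpar := (floorParityColoring hf).odd_length_iff_not_congr p |>.1 hodd
    change ¬decide (Even ⌊f u⌋) = true ↔ decide (Even ⌊f v⌋) = true at hpar
    simp only [decide_eq_true_eq] at hpar
    rw [← Int.not_even_iff_odd, Int.even_sub]
    tauto
  rw [hk] at hle ⊢
  have hle' : |k| ≤ 1 := by exact_mod_cast hle
  obtain ⟨m, hm⟩ := hk_odd
  rw [abs_le] at hle'
  have : |k| = 1 := by rw [abs_eq zero_le_one]; omega
  exact_mod_cast this

end UnitSteps

lemma Reachable.of_induce_preconnected {H : SimpleGraph V} {s : Set V}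
    (hs : (H.induce s).Preconnected) {a b : V} (ha : a ∈ s) (hb : b ∈ s) : H.Reachable a b :=
  (hs ⟨a, ha⟩ ⟨b, hb⟩).map (Embedding.induce s).toHom

lemma Walk.odd_length_of_adj_of_colorable_two {H H' : SimpleGraph V} (hH' : H'.Colorable 2)
    (hle : H ≤ H') {u v : V} (p : H.Walk u v) (huv : H'.Adj u v) : Odd p.length := by
  obtain ⟨c⟩ := hH'
  set c' := recolorOfEquiv H' finTwoEquiv c
  rw [← p.length_mapLe hle, c'.odd_length_iff_not_congr]
  have := c'.valid huv
  revert this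
  cases c' u <;> cases c' v <;> simp

lemma adj_of_maximal_colorable_two {K H : SimpleGraph V}
    (hmax : ∀ H', H' ≤ K → H'.Colorable 2 → H ≤ H' → H' = H) (hle : H ≤ K)
    (c : H.Coloring Bool) {a b : V} (hab : K.Adj a b) (hc : c a ≠ c b) : H.Adj a b := by
  have hcol : (H ⊔ edge a b).Colorable 2 := by
    refine (Coloring.mk c ?_).colorable
    rintro x y (hxy | hxy)
    · exact c.valid hxy
    · obtain ⟨⟨rfl, rfl⟩ | ⟨rfl, rfl⟩, -⟩ := (edge_adj _ _ _ _).1 hxy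
      exacts [hc, hc.symm]
  rw [← hmax _ (sup_le hle ((edge_le_iff _).2 (Or.inr hab))) hcol le_sup_left]
  exact Or.inr ((edge_adj _ _ _ _).2 ⟨Or.inl ⟨rfl, rfl⟩, hab.ne⟩)

def tightGraph (G : SimpleGraph V) (α : V → ℝ) : SimpleGraph V where
  Adj a b := G.Adj a b ∧ |α a - α b| = 1
  symm := ⟨fun _ _ h => ⟨h.1.symm, by rw [abs_sub_comm]; exact h.2⟩⟩
  loopless := ⟨fun _ h => G.irrefl h.1⟩

lemma tightGraph_le (G : SimpleGraph V) (α : V → ℝ) : tightGraph G α ≤ G := fun _ _ h => h.1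

end SimpleGraph

lemma abs_indicator_half_le {V : Type*} (s : Set V) (g : V → Bool) (a : V) :
    |s.indicator (fun v => if g v then (1 / 2 : ℝ) else -(1 / 2)) a| ≤ 1 / 2 := by
  by_cases ha : a ∈ s <;> cases hga : g a <;> norm_num [Set.indicator, ha, hga]

lemma abs_indicator_half_sub_eq_one_iff {V : Type*} (s : Set V) (g : V → Bool) (a b : V) :
    |s.indicator (fun v => if g v then (1 / 2 : ℝ) else -(1 / 2)) a -
        s.indicator (fun v => if g v then (1 / 2 : ℝ) else -(1 / 2)) b| = 1 ↔
      a ∈ s ∧ b ∈ s ∧ g a ≠ g b := by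
  by_cases ha : a ∈ s <;> by_cases hb : b ∈ s <;> cases hga : g a <;> cases hgb : g b <;>
    norm_num [Set.indicator, ha, hb, hga, hgb]

section Fin

open SimpleGraph

variable {N : ℕ}

lemma inn_stdBasis_sub (i j : Fin N) (α : Fin N → ℝ) :
    inn (stdBasis i - stdBasis j) α = α i - α j := by
  simp [inn, stdBasis, Pi.single_apply, sub_mul, ite_mul, Finset.sum_sub_distrib]

lemma stdBasis_sub_mem_nabla_iff {G : SimpleGraph (Fin N)} {i j : Fin N} :
    stdBasis i - stdBasis j ∈ nabla G ↔ G.Adj i j := by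
  refine ⟨?_, fun h => ⟨i, j, h, rfl⟩⟩
  rintro ⟨a, b, hab, heq⟩
  have ha := congrFun heq a
  have hb := congrFun heq b
  simp only [Pi.sub_apply, stdBasis, Pi.single_apply, hab.ne, hab.ne.symm, if_true,
    if_false] at ha hb
  split_ifs at ha hb <;> first | (subst_vars; exact hab) | (norm_num at ha; done) | norm_num at hb

lemma faceGraph_eq_tightGraph (G : SimpleGraph (Fin N)) (α : Fin N → ℝ) :
    faceGraph {x | x ∈ nabla G ∧ inn x α = -1} = G.tightGraph α := by
  ext a b
  simp only [faceGraph, fromRel_adj, Set.mem_ofPred_eq, stdBasis_sub_mem_nabla_iff,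
    inn_stdBasis_sub, tightGraph]
  constructor
  · rintro ⟨-, ⟨h, he⟩ | ⟨h, he⟩⟩
    · exact ⟨h, by rw [he]; norm_num⟩
    · exact ⟨h.symm, by rw [abs_sub_comm, he]; norm_num⟩
  · rintro ⟨h, he⟩
    refine ⟨h.ne, ?_⟩
    rcases (abs_eq zero_le_one).1 he with he | he
    · exact Or.inr ⟨h.symm, by linarith⟩
    · exact Or.inl ⟨h, he⟩

lemma forall_nabla_neg_one_le_inn_iff (G : SimpleGraph (Fin N)) (α : Fin N → ℝ) :
    (∀ x ∈ nabla G, -1 ≤ inn x α) ↔ ∀ a b, G.Adj a b → |α a - α b| ≤ 1 := by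
  refine ⟨fun h a b hab => abs_le.2 ⟨?_, ?_⟩, ?_⟩
  · simpa [inn_stdBasis_sub] using h _ ⟨a, b, hab, rfl⟩
  · have := h _ ⟨b, a, hab.symm, rfl⟩
    rw [inn_stdBasis_sub] at this
    linarith
  · rintro h x ⟨a, b, hab, rfl⟩
    rw [inn_stdBasis_sub]
    linarith [neg_abs_le (α a - α b), h a b hab]

lemma nonempty_of_faceGraph_ne_bot {F : Set (Fin N → ℝ)} (h : faceGraph F ≠ ⊥) : F.Nonempty := by
  obtain ⟨a, b, hab⟩ := ne_bot_iff_exists_adj.1 h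
  rcases hab.2 with h | h
  exacts [⟨_, h⟩, ⟨_, h⟩]

lemma le_inducedOn_support {G H : SimpleGraph (Fin N)} (h : H ≤ G) :
    H ≤ inducedOn G H.support :=
  fun a b hab => ⟨h hab, ⟨b, hab⟩, ⟨a, hab.symm⟩⟩

theorem maxBipartiteSubgraph_tightGraph {G : SimpleGraph (Fin N)} {α : Fin N → ℝ}
    (hα : ∀ a b, G.Adj a b → |α a - α b| ≤ 1)
    (hconn : ((G.tightGraph α).induce (G.tightGraph α).support).Connected) :
    MaxBipartiteSubgraph (inducedOn G (G.tightGraph α).support) (G.tightGraph α) := by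
  have hT : ∀ a b, (G.tightGraph α).Adj a b → |α a - α b| = 1 := fun _ _ h => h.2
  refine ⟨le_inducedOn_support (tightGraph_le G α), (floorParityColoring hT).colorable,
    fun H' hH' hcol hTH' => le_antisymm (fun a b hab => ?_) hTH'⟩
  obtain ⟨hGab, ha, hb⟩ := hH' hab
  obtain ⟨p⟩ := Reachable.of_induce_preconnected hconn.preconnected ha hb
  exact ⟨hGab, p.abs_sub_eq_one_of_odd_length hT
    (p.odd_length_of_adj_of_colorable_two hcol hTH' hab) (hα a b hGab)⟩

theorem exists_tightGraph_eq_of_maxBipartiteSubgraph {G H : SimpleGraph (Fin N)}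
    (hmax : MaxBipartiteSubgraph (inducedOn G H.support) H) :
    ∃ α : Fin N → ℝ, (∀ a b, G.Adj a b → |α a - α b| ≤ 1) ∧ G.tightGraph α = H := by
  obtain ⟨hle, ⟨c⟩, hmax⟩ := hmax
  set c' := recolorOfEquiv H finTwoEquiv c
  -- `±1/2` on the two colour classes and `0` off `V(H)`: the tight edges are the edges of
  -- `G[V(H)]` across the bipartition.
  refine ⟨H.support.indicator fun v => if c' v then 1 / 2 else -(1 / 2), fun a b _ => ?_, ?_⟩
  · exact (abs_sub _ _).trans (by
      linarith [abs_indicator_half_le H.support c' a, abs_indicator_half_le H.support c' b])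
  ext a b
  simp only [tightGraph, abs_indicator_half_sub_eq_one_iff]
  refine ⟨fun ⟨hG, ha, hb, hc⟩ => adj_of_maximal_colorable_two hmax hle c' ⟨hG, ha, hb⟩ hc,
    fun h => ⟨(hle h).1, (hle h).2.1, (hle h).2.2, c'.valid h⟩⟩

end Fin

theorem stmt7_general {N : ℕ} (G : SimpleGraph (Fin N))
    (H : SimpleGraph (Fin N))
    (hconn : (SimpleGraph.induce H.support H).Connected) (hnt : H ≠ ⊥) :
    (∃ F : Set (Fin N → ℝ), IsFace G F ∧ F.Nonempty ∧ faceGraph F = H) ↔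
      MaxBipartiteSubgraph (inducedOn G H.support) H := by
  constructor
  · rintro ⟨F, ⟨α, hα, rfl⟩, -, rfl⟩
    rw [faceGraph_eq_tightGraph] at hconn ⊢
    exact maxBipartiteSubgraph_tightGraph ((forall_nabla_neg_one_le_inn_iff G α).1 hα) hconn
  · intro hmax
    obtain ⟨α, hα, hαH⟩ := exists_tightGraph_eq_of_maxBipartiteSubgraph hmax
    have hF : faceGraph {x | x ∈ nabla G ∧ inn x α = -1} = H := by
      rw [faceGraph_eq_tightGraph, hαH]
    exact ⟨_, ⟨α, (forall_nabla_neg_one_le_inn_iff G α).2 hα, rfl⟩,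
      nonempty_of_faceGraph_ne_bot (hF ▸ hnt), hF⟩

theorem stmt7 {N : ℕ} (G : SimpleGraph (Fin N)) (hG : G.Connected)
    (H : SimpleGraph (Fin N)) (hHG : H ≤ G)
    (hconn : (SimpleGraph.induce H.support H).Connected) (hnt : H ≠ ⊥) :
    (∃ F : Set (Fin N → ℝ), IsFace G F ∧ F.Nonempty ∧ faceGraph F = H) ↔
      MaxBipartiteSubgraph (inducedOn G H.support) H :=
  stmt7_general G H hconn hnt
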